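/- Let {q_k}_{k≥0} be a non-increasing sequence of positive reals and for n ∈ ℕ let f_n := D_{2^{n+1}} − D_{2^n}. Then there is an absolute constant c > 0 such that for every n ≥ 1: ∫₀¹ ( sup_{0≤s<n} |t_{2^n+2^s}(f_n)(x)| )^{1/2} dx ≥ c n 2^{−n/2}; consequently ‖t*(f_n)‖_{L^{1/2}}^{1/2} / ‖f_n‖_{H_{1/2}}^{1/2} ≥ c n, which tends to ∞ as n → ∞. -/

import Mathlib

open MeasureTheory Filter
open scoped ENNReal NNReal

noncomputable section

namespace Walsh

/-- Lebesgue measure restricted to `[0,1)`. -/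
def μI : Measure ℝ := volume.restrict (Set.Ico (0:ℝ) 1)

/-- The `k`-th binary digit `x_k` of `x ∈ [0,1)`, using the expansion terminating
in `0`'s for dyadic rationals. -/
def digit (k : ℕ) (x : ℝ) : ℕ := (⌊x * 2 ^ (k + 1)⌋).toNat % 2

/-- `ε_k(n)`, the `k`-th binary coefficient of `n`. -/
def eps (k n : ℕ) : ℕ := if n.testBit k then 1 else 0

/-- Walsh–Paley function `w_n(x) = (-1)^{Σ_k ε_k(n) x_k}`. -/
def walsh (n : ℕ) (x : ℝ) : ℝ :=
  (-1 : ℝ) ^ (∑ k ∈ Finset.range (n + 1), eps k n * digit k x)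

/-- Walsh–Dirichlet kernel `D_n = Σ_{k=0}^{n-1} w_k`. -/
def D (n : ℕ) (x : ℝ) : ℝ := ∑ k ∈ Finset.range n, walsh k x

/-- Walsh–Fejér kernel `K_n = (1/n) Σ_{k=1}^{n} D_k`. -/
def K (n : ℕ) (x : ℝ) : ℝ := (1 / (n : ℝ)) * ∑ k ∈ Finset.Icc 1 n, D k x

/-- Partial sums `S_M(f) = Σ_{i=0}^{M-1} f̂(i) w_i` of the Walsh–Fourier series. -/
def S (f : ℝ → ℝ) (M : ℕ) (x : ℝ) : ℝ :=
  ∑ i ∈ Finset.range M, (∫ t in Set.Ico (0:ℝ) 1, f t * walsh i t) * walsh i x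

/-- `Q_n = q_0 + ⋯ + q_{n-1}`. -/
def Q (q : ℕ → ℝ) (n : ℕ) : ℝ := ∑ k ∈ Finset.range n, q k

/-- Walsh–Nörlund mean `t_n(f) = (1/Q_n) Σ_{k=1}^n q_{n-k} S_k(f)`. -/
def t (q : ℕ → ℝ) (n : ℕ) (f : ℝ → ℝ) (x : ℝ) : ℝ :=
  (1 / Q q n) * ∑ k ∈ Finset.Icc 1 n, q (n - k) * S f k x

/-- Walsh–Nörlund kernel `F_n = (1/Q_n) Σ_{k=1}^n q_{n-k} D_k`. -/
def F (q : ℕ → ℝ) (n : ℕ) (x : ℝ) : ℝ :=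
  (1 / Q q n) * ∑ k ∈ Finset.Icc 1 n, q (n - k) * D k x

/-- Maximal Nörlund operator `t^*(f) = sup_{n ≥ 1} |t_n(f)|`, valued in `ℝ≥0∞`. -/
def tstar (q : ℕ → ℝ) (f : ℝ → ℝ) (x : ℝ) : ℝ≥0∞ :=
  ⨆ n ∈ Set.Ici 1, ENNReal.ofReal |t q n f x|

/-- `L^p[0,1)` quasinorm (`0 < p ≤ 1`) of a real function, valued in `ℝ≥0∞`. -/
def LpNorm (p : ℝ) (g : ℝ → ℝ) : ℝ≥0∞ :=
  (∫⁻ x in Set.Ico (0:ℝ) 1, ENNReal.ofReal |g x| ^ p) ^ (1 / p)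

/-- `L^p[0,1)` quasinorm of an `ℝ≥0∞`-valued function. -/
def LpNormE (p : ℝ) (g : ℝ → ℝ≥0∞) : ℝ≥0∞ :=
  (∫⁻ x in Set.Ico (0:ℝ) 1, g x ^ p) ^ (1 / p)

/-- `L^∞[0,1)` norm. -/
def LinfNorm (g : ℝ → ℝ) : ℝ≥0∞ := essSup (fun x => ENNReal.ofReal |g x|) μI

/-- Dyadic maximal function `E^*(f) = sup_m |S_{2^m}(f)|`, valued in `ℝ≥0∞`. -/
def maxS (f : ℝ → ℝ) (x : ℝ) : ℝ≥0∞ := ⨆ m : ℕ, ENNReal.ofReal |S f (2 ^ m) x|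

/-- Dyadic Hardy space quasinorm `‖f‖_{H_p} = ‖sup_m |S_{2^m} f|‖_{L^p}`. -/
def HpNorm (p : ℝ) (f : ℝ → ℝ) : ℝ≥0∞ :=
  (∫⁻ x in Set.Ico (0:ℝ) 1, maxS f x ^ p) ^ (1 / p)

/-- Dyadic (logical) addition `x ∔ y = Σ_k |x_k - y_k| 2^{-(k+1)}`. -/
def dadd (x y : ℝ) : ℝ :=
  ∑' k : ℕ, |(digit k x : ℝ) - (digit k y : ℝ)| * (2 : ℝ)⁻¹ ^ (k + 1)

/-- The dyadic interval `I_N = [0, 2^{-N})`. -/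
def IN (N : ℕ) : Set ℝ := Set.Ico (0:ℝ) (1 / 2 ^ N)

/-- `F_{n,1} = (w_n/Q_n) Σ_{j=1}^r Q_{n^{(j-1)}} w_{2^{n_j}} D_{2^{n_j}}`,
the first part of the Nörlund kernel decomposition. The sum over the binary
decomposition `n = 2^{n_1} + ⋯ + 2^{n_r}` is re-indexed over the set bit
positions `i` of `n`; if `i = n_j` then `n^{(j-1)} = n mod 2^{i+1}`. -/
def F1 (q : ℕ → ℝ) (n : ℕ) (x : ℝ) : ℝ :=
  (walsh n x / Q q n) *
    ∑ i ∈ Finset.range (n + 1),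
      if n.testBit i then Q q (n % 2 ^ (i + 1)) * walsh (2 ^ i) x * D (2 ^ i) x else 0

end Walsh

/-!
`f_n = w_{2^n} D_{2^n}` has Walsh spectrum `[2^n, 2^{n+1})`, so `S_M f_n = w_{2^n} D_{M - 2^n}`
for `M ≤ 2^{n+1}`. Hence `sup_m |S_{2^m} f_n| = |f_n| = 2^n` on `[0, 2^{-n})` and `0` elsewhere,
and `‖f_n‖_{H_{1/2}}^{1/2} = 2^{-n/2}`. On `[0, 2^{-s})` every `w_r` with `r < 2^s` equals `1`, so
there `|t_{2^n+2^s} f_n| = Q_{2^n+2^s}⁻¹ ∑_{i<2^s} q_i (2^s - i)`. For non-increasing `q`,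
Chebyshev's sum inequality and the monotonicity of `Q_m / m` bound this from below by
`2^{2s} / (4 · 2^n)`. Each of the disjoint blocks `[2^{-s-1}, 2^{-s})`, `s < n`, then contributes
`2^{-s-1} · 2^s 2^{-n/2} / 2 = 2^{-n/2} / 4` to the integral of the square root of the maximal
function, which is therefore at least `n 2^{-n/2} / 4`.
-/

namespace Walsh

open Finset Set MeasureTheory

lemma le_biSup_of_mem {ι : Type*} {s : Finset ι} (F : ι → ℝ) {i : ι} (hi : i ∈ s) :
    F i ≤ ⨆ j ∈ s, F j := by
  refine le_ciSup₂ (f := fun j (_ : j ∈ s) => F j) ?_ i hi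
  refine (s.finite_toSet.image F).bddAbove.mono ?_
  rintro _ ⟨_, ⟨j, rfl⟩, ⟨hj, rfl⟩⟩
  exact ⟨j, hj, rfl⟩

lemma le_rpow_half_of_sq_le {a b : ℝ} (ha : 0 ≤ a) (h : a ^ 2 ≤ b) :
    a ≤ b ^ (1 / 2 : ℝ) := by
  rw [← Real.sqrt_eq_rpow, ← Real.sqrt_sq ha]
  exact Real.sqrt_le_sqrt h

lemma rpow_neg_half_sq (n : ℕ) : ((2 : ℝ) ^ (-(n : ℝ) / 2)) ^ 2 = 1 / 2 ^ n := by
  rw [← Real.rpow_natCast, ← Real.rpow_mul (by norm_num),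
    show -(n : ℝ) / 2 * (2 : ℕ) = -n by push_cast; ring, Real.rpow_neg (by norm_num),
    Real.rpow_natCast, one_div]

lemma rpow_half_mul_inv_two_pow (n : ℕ) :
    ((2 : ℝ) ^ n) ^ (1 / 2 : ℝ) * (1 / 2 ^ n) = 2 ^ (-(n : ℝ) / 2) := by
  rw [← Real.rpow_natCast, ← Real.rpow_mul (by norm_num), one_div (_ ^ _),
    ← Real.rpow_neg (by norm_num), ← Real.rpow_add (by norm_num)]
  ring_nf

lemma rpow_half_rpow_inv_half (X : ℝ≥0∞) : (X ^ (1 / (1 / 2 : ℝ))) ^ (1 / 2 : ℝ) = X := by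
  rw [← ENNReal.rpow_mul]
  norm_num

lemma Q_pos {q : ℕ → ℝ} (hq : ∀ k, 0 < q k) {m : ℕ} (hm : 0 < m) : 0 < Q q m :=
  sum_pos (fun k _ => hq k) (nonempty_range_iff.mpr hm.ne')

lemma mul_Q_le_mul_Q {q : ℕ → ℝ} (hq : Antitone q) {k m : ℕ} (hkm : k ≤ m) :
    (k : ℝ) * Q q m ≤ m * Q q k := by
  have hsplit : Q q m = Q q k + ∑ j ∈ Ico k m, q j := (sum_range_add_sum_Ico q hkm).symm
  have htail : ∑ j ∈ Ico k m, q j ≤ (m - k : ℝ) * q k := by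
    have := sum_le_card_nsmul (Ico k m) q (q k) fun j hj => hq (Finset.mem_Ico.mp hj).1
    rwa [Nat.card_Ico, nsmul_eq_mul, Nat.cast_sub hkm] at this
  have hhead : (k : ℝ) * q k ≤ Q q k := by
    have := card_nsmul_le_sum (range k) q (q k) fun j hj => hq (mem_range.mp hj).le
    rwa [card_range, nsmul_eq_mul] at this
  have hk : (0 : ℝ) ≤ k := Nat.cast_nonneg k
  have hmk : (0 : ℝ) ≤ m - k := sub_nonneg.mpr (Nat.cast_le.mpr hkm)
  rw [hsplit]
  nlinarith [mul_le_mul_of_nonneg_left htail hk, mul_le_mul_of_nonneg_left hhead hmk]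

lemma two_mul_sum_range_sub (m : ℕ) :
    2 * ∑ i ∈ range m, ((m - i : ℕ) : ℝ) = m * (m + 1) := by
  induction m with
  | zero => simp
  | succ m ih =>
    rw [sum_range_succ', Nat.sub_zero]
    simp only [Nat.add_sub_add_right]
    push_cast
    linarith

lemma succ_mul_Q_le {q : ℕ → ℝ} (hq : Antitone q) (m : ℕ) :
    (m + 1) * Q q m ≤ 2 * ∑ i ∈ range m, q i * ((m - i : ℕ) : ℝ) := by
  have hg : Antitone fun i => ((m - i : ℕ) : ℝ) := fun i j hij =>
    Nat.cast_le.mpr (Nat.sub_le_sub_left hij m)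
  have hcheb := ((hq.monovary hg).monovaryOn ↑(range m)).sum_mul_sum_le_card_mul_sum
  rw [card_range] at hcheb
  have hgauss := two_mul_sum_range_sub m
  rcases Nat.eq_zero_or_pos m with rfl | hm
  · simp [Q]
  · refine le_of_mul_le_mul_left ?_ (Nat.cast_pos.mpr hm : (0 : ℝ) < m)
    rw [Q]
    linear_combination 2 * hcheb - (∑ i ∈ range m, q i) * hgauss

lemma sq_mul_Q_add_le {q : ℕ → ℝ} (hq : Antitone q) (hq₀ : ∀ k, 0 ≤ q k) {a m : ℕ}
    (hma : m ≤ a) :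
    (m : ℝ) ^ 2 * Q q (a + m) ≤ 4 * a * ∑ i ∈ range m, q i * ((m - i : ℕ) : ℝ) := by
  have hQ := mul_Q_le_mul_Q hq (k := m) (m := a + m) (by omega)
  have hT := succ_mul_Q_le hq m
  have hQ₀ : 0 ≤ Q q m := sum_nonneg fun k _ => hq₀ k
  have hm : (0 : ℝ) ≤ m := Nat.cast_nonneg m
  have ha : (0 : ℝ) ≤ a := Nat.cast_nonneg a
  have hma' : (m : ℝ) ≤ a := Nat.cast_le.mpr hma
  push_cast at hQ
  nlinarith [mul_le_mul_of_nonneg_left hQ hm, mul_nonneg hm hQ₀, mul_nonneg ha hQ₀]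

lemma eps_eq_div_mod (k n : ℕ) : eps k n = n / 2 ^ k % 2 := by
  rw [eps, Nat.testBit_eq_decide_div_mod_eq]
  rcases Nat.mod_two_eq_zero_or_one (n / 2 ^ k) with h | h <;> simp [h]

lemma eps_of_lt {k n : ℕ} (h : n < 2 ^ k) : eps k n = 0 := by
  simp [eps, Nat.testBit_lt_two_pow h]

lemma eps_two_pow_add_of_lt {k J : ℕ} (l : ℕ) (hk : k < J) : eps k (2 ^ J + l) = eps k l := by
  simp [eps, Nat.testBit_two_pow_add_gt hk]

lemma eps_two_pow_add_self {J l : ℕ} (hl : l < 2 ^ J) : eps J (2 ^ J + l) = 1 := by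
  simp [eps, Nat.testBit_two_pow_add_eq, Nat.testBit_lt_two_pow hl]

lemma digit_eq_floor_mod (k : ℕ) (x : ℝ) : digit k x = ⌊x * 2 ^ (k + 1)⌋₊ % 2 := by
  rw [digit, Int.floor_toNat]

lemma digit_eq_eps_floor {J k : ℕ} (hk : k < J) (x : ℝ) :
    digit k x = eps (J - 1 - k) ⌊x * 2 ^ J⌋₊ := by
  have hJ : (2 : ℝ) ^ J = 2 ^ (k + 1) * ((2 ^ (J - 1 - k) : ℕ) : ℝ) := by
    rw [Nat.cast_pow, Nat.cast_ofNat, ← pow_add]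
    congr 1
    omega
  rw [eps_eq_div_mod, ← Nat.floor_div_natCast, hJ, ← mul_assoc,
    mul_div_cancel_right₀ _ (by positivity), digit_eq_floor_mod]

lemma digit_eq_one {k : ℕ} {x : ℝ} (h₀ : 1 / 2 ^ (k + 1) ≤ x) (h₁ : x < 1 / 2 ^ k) :
    digit k x = 1 := by
  rw [div_le_iff₀ (by positivity)] at h₀
  rw [lt_div_iff₀ (by positivity)] at h₁
  have hfloor : ⌊x * 2 ^ (k + 1)⌋₊ = 1 := by
    rw [Nat.floor_eq_iff (by linarith)]
    rw [pow_succ] at h₀ ⊢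
    constructor <;> push_cast <;> linarith
  rw [digit_eq_floor_mod, hfloor]

lemma sum_eps_mul_eq_of_lt {n A B : ℕ} (a : ℕ → ℕ) (hA : n < 2 ^ A) (hAB : A ≤ B) :
    ∑ k ∈ range B, eps k n * a k = ∑ k ∈ range A, eps k n * a k := by
  refine (sum_subset (range_subset_range.mpr hAB) fun k _ hk => ?_).symm
  rw [eps_of_lt (hA.trans_le (Nat.pow_le_pow_right two_pos (by simpa using hk))), zero_mul]

lemma walsh_eq_of_lt {J n : ℕ} (hn : n < 2 ^ J) (x : ℝ) :
    walsh n x = (-1 : ℝ) ^ (∑ k ∈ range J, eps k n * digit k x) := by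
  have hn' : n < 2 ^ (n + 1) :=
    Nat.lt_two_pow_self.trans (Nat.pow_lt_pow_right one_lt_two n.lt_succ_self)
  rw [walsh, ← sum_eps_mul_eq_of_lt _ hn' (le_max_left (n + 1) J),
    sum_eps_mul_eq_of_lt _ hn (le_max_right (n + 1) J)]

lemma walsh_eq_floor {J u : ℕ} (hu : u < 2 ^ J) (x : ℝ) :
    walsh u x = (-1 : ℝ) ^ (∑ k ∈ range J, eps (J - 1 - k) u * eps k ⌊x * 2 ^ J⌋₊) := by
  rw [walsh_eq_of_lt hu, ← sum_range_reflect]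
  refine congrArg _ (sum_congr rfl fun k hk => ?_)
  have hk : k < J := mem_range.mp hk
  rw [digit_eq_eps_floor (J := J) (by omega), show J - 1 - (J - 1 - k) = k by omega]

lemma walsh_congr_floor {J u : ℕ} (hu : u < 2 ^ J) {x y : ℝ}
    (h : ⌊x * 2 ^ J⌋₊ = ⌊y * 2 ^ J⌋₊) : walsh u x = walsh u y := by
  rw [walsh_eq_floor hu, walsh_eq_floor hu, h]

lemma walsh_eq_one_of_mem_IN {N r : ℕ} (hr : r < 2 ^ N) {x : ℝ} (hx : x ∈ IN N) :
    walsh r x = 1 := by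
  have hfloor : ⌊x * 2 ^ N⌋₊ = 0 :=
    Nat.floor_eq_zero.mpr ((lt_div_iff₀ (by positivity)).mp hx.2 |>.trans_eq' (by ring))
  simp [walsh_eq_floor hr, hfloor, eps_of_lt (Nat.two_pow_pos _)]

lemma walsh_two_pow_add {n r : ℕ} (hr : r < 2 ^ n) (x : ℝ) :
    walsh (2 ^ n + r) x = (-1 : ℝ) ^ digit n x * walsh r x := by
  have h : 2 ^ n + r < 2 ^ (n + 1) := by rw [pow_succ]; omega
  rw [walsh_eq_of_lt h, walsh_eq_of_lt hr, sum_range_succ, eps_two_pow_add_self hr, one_mul,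
    pow_add, mul_comm]
  congr 2
  exact sum_congr rfl fun k hk => by rw [eps_two_pow_add_of_lt r (mem_range.mp hk)]

lemma sum_walsh_Ico_two_pow {n M : ℕ} (hM : M ≤ 2 ^ (n + 1)) (x : ℝ) :
    ∑ u ∈ Ico (2 ^ n) M, walsh u x = (-1 : ℝ) ^ digit n x * D (M - 2 ^ n) x := by
  rw [sum_Ico_eq_sum_range, D, mul_sum]
  refine sum_congr rfl fun r hr => walsh_two_pow_add ?_ x
  have := mem_range.mp hr
  rw [pow_succ] at hM
  omega

lemma D_two_pow_succ_sub (n : ℕ) (x : ℝ) :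
    D (2 ^ (n + 1)) x - D (2 ^ n) x = (-1 : ℝ) ^ digit n x * D (2 ^ n) x := by
  have h : 2 ^ n ≤ 2 ^ (n + 1) := Nat.pow_le_pow_right two_pos n.le_succ
  have hsum := sum_walsh_Ico_two_pow (n := n) le_rfl x
  rw [sum_Ico_eq_sub _ h, pow_succ, Nat.mul_two, Nat.add_sub_cancel] at hsum
  rwa [pow_succ, Nat.mul_two]

lemma D_eq_of_mem_IN {N j : ℕ} (hj : j ≤ 2 ^ N) {x : ℝ} (hx : x ∈ IN N) : D j x = j := by
  rw [D, sum_congr rfl fun r hr => walsh_eq_one_of_mem_IN ((mem_range.mp hr).trans_le hj) hx]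
  simp

lemma D_two_pow_eq_zero {N : ℕ} {x : ℝ} (h₀ : 1 / 2 ^ N ≤ x) (h₁ : x < 1) :
    D (2 ^ N) x = 0 := by
  induction N with
  | zero => norm_num at h₀; linarith
  | succ N ih =>
    have hsucc : D (2 ^ (N + 1)) x = (1 + (-1 : ℝ) ^ digit N x) * D (2 ^ N) x := by
      linarith [D_two_pow_succ_sub N x]
    rcases le_or_gt (1 / 2 ^ N) x with hx | hx
    · rw [hsucc, ih hx, mul_zero]
    · rw [hsucc, digit_eq_one h₀ hx]
      ring

def dyadicInterval (J l : ℕ) : Set ℝ := Ico ((l : ℝ) / 2 ^ J) ((l + 1) / 2 ^ J)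

lemma measurableSet_dyadicInterval (J l : ℕ) : MeasurableSet (dyadicInterval J l) :=
  measurableSet_Ico

lemma mem_dyadicInterval_iff {J l : ℕ} {x : ℝ} :
    x ∈ dyadicInterval J l ↔ 0 ≤ x ∧ ⌊x * 2 ^ J⌋₊ = l := by
  have h2 : (0 : ℝ) < 2 ^ J := by positivity
  rw [dyadicInterval, Set.mem_Ico, div_le_iff₀ h2, lt_div_iff₀ h2]
  constructor
  · rintro ⟨h₀, h₁⟩
    have hx : 0 ≤ x := nonneg_of_mul_nonneg_left ((Nat.cast_nonneg l).trans h₀) h2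
    exact ⟨hx, (Nat.floor_eq_iff (by positivity)).mpr ⟨h₀, h₁⟩⟩
  · rintro ⟨hx, rfl⟩
    exact ⟨Nat.floor_le (by positivity), Nat.lt_floor_add_one _⟩

lemma Ico_zero_one_eq_biUnion_dyadicInterval (J : ℕ) :
    Ico (0 : ℝ) 1 = ⋃ l ∈ range (2 ^ J), dyadicInterval J l := by
  have h2 : (0 : ℝ) < 2 ^ J := by positivity
  ext x
  simp only [mem_iUnion, mem_dyadicInterval_iff, Finset.mem_range, exists_prop, Set.mem_Ico]
  constructor
  · rintro ⟨h₀, h₁⟩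
    refine ⟨_, ?_, h₀, rfl⟩
    exact_mod_cast (Nat.floor_lt (by positivity)).mpr (by push_cast; nlinarith)
  · rintro ⟨l, hl, h₀, rfl⟩
    refine ⟨h₀, not_le.mp fun h => ?_⟩
    have : 2 ^ J ≤ ⌊x * 2 ^ J⌋₊ := Nat.le_floor (by push_cast; nlinarith)
    omega

lemma pairwiseDisjoint_dyadicInterval (J : ℕ) (s : Set ℕ) :
    s.PairwiseDisjoint (dyadicInterval J) := fun _ _ _ _ hne =>
  Set.disjoint_left.mpr fun _ hx hx' =>
    hne ((mem_dyadicInterval_iff.mp hx).2.symm.trans (mem_dyadicInterval_iff.mp hx').2)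

lemma volume_real_dyadicInterval (J l : ℕ) : volume.real (dyadicInterval J l) = 1 / 2 ^ J := by
  rw [dyadicInterval, Real.volume_real_Ico_of_le (by gcongr; linarith)]
  ring

lemma integrableOn_and_integral_of_eq_floor {J : ℕ} {h : ℝ → ℝ} {v : ℕ → ℝ}
    (hv : ∀ x ∈ Ico (0 : ℝ) 1, h x = v ⌊x * 2 ^ J⌋₊) :
    IntegrableOn h (Ico 0 1) ∧
      ∫ x in Ico (0 : ℝ) 1, h x = (∑ l ∈ range (2 ^ J), v l) / 2 ^ J := by
  have hcover := Ico_zero_one_eq_biUnion_dyadicInterval J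
  have hpiece : ∀ l ∈ range (2 ^ J), EqOn h (fun _ => v l) (dyadicInterval J l) :=
    fun l hl x hx => by
      rw [hv x (hcover ▸ mem_biUnion hl hx), (mem_dyadicInterval_iff.mp hx).2]
  have hint : ∀ l ∈ range (2 ^ J), IntegrableOn h (dyadicInterval J l) := fun l hl =>
    (integrableOn_const (by simp [dyadicInterval])).congr_fun (hpiece l hl).symm
      (measurableSet_dyadicInterval J l)
  rw [hcover]
  refine ⟨integrableOn_finset_iUnion.mpr hint, ?_⟩
  rw [integral_biUnion_finset (s := dyadicInterval J) _
    (fun l _ => measurableSet_dyadicInterval J l) (pairwiseDisjoint_dyadicInterval J _) hint,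
    sum_div]
  refine sum_congr rfl fun l hl => ?_
  rw [setIntegral_congr_fun (measurableSet_dyadicInterval J l) (hpiece l hl), setIntegral_const,
    volume_real_dyadicInterval, smul_eq_mul]
  ring

lemma integrableOn_of_floor_eq {J : ℕ} {h : ℝ → ℝ}
    (hh : ∀ x y, ⌊x * 2 ^ J⌋₊ = ⌊y * 2 ^ J⌋₊ → h x = h y) :
    IntegrableOn h (Ico 0 1) := by
  refine (integrableOn_and_integral_of_eq_floor (J := J) (v := fun l => h (l / 2 ^ J))
    fun x _ => hh _ _ ?_).1
  rw [div_mul_cancel₀ _ (by positivity), Nat.floor_natCast]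

lemma sum_neg_one_pow_sum_mul_eps (J : ℕ) (c : ℕ → ℕ) :
    ∑ l ∈ range (2 ^ J), (-1 : ℝ) ^ (∑ k ∈ range J, c k * eps k l)
      = ∏ k ∈ range J, (1 + (-1 : ℝ) ^ c k) := by
  induction J with
  | zero => simp
  | succ J ih =>
    have hlow : ∑ l ∈ range (2 ^ J), (-1 : ℝ) ^ (∑ k ∈ range (J + 1), c k * eps k l)
        = ∑ l ∈ range (2 ^ J), (-1 : ℝ) ^ (∑ k ∈ range J, c k * eps k l) :=
      sum_congr rfl fun l hl => by
        rw [sum_range_succ, eps_of_lt (mem_range.mp hl), mul_zero, add_zero]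
    have hhigh :
        ∑ l ∈ range (2 ^ J), (-1 : ℝ) ^ (∑ k ∈ range (J + 1), c k * eps k (2 ^ J + l))
          = (∑ l ∈ range (2 ^ J), (-1 : ℝ) ^ (∑ k ∈ range J, c k * eps k l))
              * (-1) ^ c J := by
      rw [sum_mul]
      refine sum_congr rfl fun l hl => ?_
      rw [sum_range_succ, eps_two_pow_add_self (mem_range.mp hl), mul_one, pow_add,
        sum_congr rfl fun k hk => by rw [eps_two_pow_add_of_lt l (mem_range.mp hk)]]
    rw [pow_succ, Nat.mul_two, sum_range_add, prod_range_succ, ← ih, hlow, hhigh]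
    ring

lemma walsh_mul_walsh_eq_floor {J u i : ℕ} (hu : u < 2 ^ J) (hi : i < 2 ^ J) (x : ℝ) :
    walsh u x * walsh i x = (-1 : ℝ) ^
      (∑ k ∈ range J, (eps (J - 1 - k) u + eps (J - 1 - k) i) * eps k ⌊x * 2 ^ J⌋₊) := by
  simp only [walsh_eq_floor hu, walsh_eq_floor hi, ← pow_add, ← sum_add_distrib, add_mul]

lemma eps_add_eps_eq_one {d u i : ℕ} (h : u.testBit d ≠ i.testBit d) :
    eps d u + eps d i = 1 := by
  unfold eps
  cases hu : u.testBit d <;> cases hi : i.testBit d <;> simp_all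

lemma integrableOn_and_integral_walsh_mul_walsh (u i : ℕ) :
    IntegrableOn (fun x => walsh u x * walsh i x) (Ico 0 1) ∧
      ∫ x in Ico (0 : ℝ) 1, walsh u x * walsh i x = if u = i then 1 else 0 := by
  set J := u + i
  have hu : u < 2 ^ J := Nat.lt_two_pow_self.trans_le (Nat.pow_le_pow_right two_pos (by omega))
  have hi : i < 2 ^ J := Nat.lt_two_pow_self.trans_le (Nat.pow_le_pow_right two_pos (by omega))
  obtain ⟨hint, hval⟩ := integrableOn_and_integral_of_eq_floor (J := J)
    (v := fun l => (-1 : ℝ) ^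
      (∑ k ∈ range J, (eps (J - 1 - k) u + eps (J - 1 - k) i) * eps k l))
    fun x _ => walsh_mul_walsh_eq_floor hu hi x
  refine ⟨hint, ?_⟩
  rw [hval, sum_neg_one_pow_sum_mul_eps]
  split_ifs with hui
  · subst hui
    rw [prod_congr rfl fun k _ => by rw [(Even.add_self _).neg_one_pow], prod_const, card_range]
    norm_num
  · obtain ⟨d, hd⟩ := Nat.exists_testBit_ne_of_ne hui
    have hdJ : d < J := by
      by_contra hdJ
      have h2 : 2 ^ J ≤ 2 ^ d := Nat.pow_le_pow_right two_pos (not_lt.mp hdJ)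
      exact hd (by
        rw [Nat.testBit_lt_two_pow (hu.trans_le h2), Nat.testBit_lt_two_pow (hi.trans_le h2)])
    rw [prod_eq_zero (i := J - 1 - d) (mem_range.mpr (by omega)), zero_div]
    rw [show J - 1 - (J - 1 - d) = d by omega, eps_add_eps_eq_one hd]
    norm_num

def fn (n : ℕ) : ℝ → ℝ := fun y => D (2 ^ (n + 1)) y - D (2 ^ n) y

lemma fn_eq_sum (n : ℕ) (x : ℝ) : fn n x = ∑ u ∈ Ico (2 ^ n) (2 ^ (n + 1)), walsh u x :=
  (sum_Ico_eq_sub _ (Nat.pow_le_pow_right two_pos n.le_succ)).symm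

lemma fn_eq_mul (n : ℕ) (x : ℝ) : fn n x = (-1 : ℝ) ^ digit n x * D (2 ^ n) x :=
  D_two_pow_succ_sub n x

lemma integral_fn_mul_walsh (n i : ℕ) :
    ∫ x in Ico (0 : ℝ) 1, fn n x * walsh i x
      = if i ∈ Finset.Ico (2 ^ n) (2 ^ (n + 1)) then 1 else 0 := by
  simp_rw [fn_eq_sum, sum_mul]
  rw [integral_finsetSum _ fun u _ => (integrableOn_and_integral_walsh_mul_walsh u i).1]
  simp_rw [(integrableOn_and_integral_walsh_mul_walsh _ i).2]
  exact sum_ite_eq' _ i fun _ => (1 : ℝ)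

lemma S_fn_eq (n M : ℕ) (x : ℝ) :
    S (fn n) M x = ∑ u ∈ Ico (2 ^ n) (min M (2 ^ (n + 1))), walsh u x := by
  simp_rw [S, integral_fn_mul_walsh, ite_mul, one_mul, zero_mul]
  rw [← sum_filter]
  congr 1
  ext u
  simp only [Finset.mem_filter, Finset.mem_range, Finset.mem_Ico, lt_min_iff]
  omega

lemma S_fn_of_le {n M : ℕ} (hM : M ≤ 2 ^ (n + 1)) (x : ℝ) :
    S (fn n) M x = (-1 : ℝ) ^ digit n x * D (M - 2 ^ n) x := by
  rw [S_fn_eq, min_eq_left hM, sum_walsh_Ico_two_pow hM]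

lemma S_fn_of_ge {n M : ℕ} (hM : 2 ^ (n + 1) ≤ M) (x : ℝ) : S (fn n) M x = fn n x := by
  rw [S_fn_eq, min_eq_right hM, fn_eq_sum]

lemma S_fn_congr_floor (n M : ℕ) {x y : ℝ}
    (h : ⌊x * 2 ^ (n + 1)⌋₊ = ⌊y * 2 ^ (n + 1)⌋₊) : S (fn n) M x = S (fn n) M y := by
  simp_rw [S_fn_eq]
  refine sum_congr rfl fun u hu => walsh_congr_floor ?_ h
  have := Finset.mem_Ico.mp hu
  omega

lemma t_fn_congr_floor (q : ℕ → ℝ) (n N : ℕ) {x y : ℝ}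
    (h : ⌊x * 2 ^ (n + 1)⌋₊ = ⌊y * 2 ^ (n + 1)⌋₊) :
    t q N (fn n) x = t q N (fn n) y := by
  simp_rw [t, S_fn_congr_floor n _ h]

lemma abs_fn_of_mem_IN {n : ℕ} {x : ℝ} (hx : x ∈ IN n) : |fn n x| = 2 ^ n := by
  rw [fn_eq_mul, D_eq_of_mem_IN le_rfl hx, abs_mul, abs_pow, abs_neg, abs_one, one_pow, one_mul]
  simp

lemma fn_eq_zero {n : ℕ} {x : ℝ} (h₀ : 1 / 2 ^ n ≤ x) (h₁ : x < 1) : fn n x = 0 := by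
  rw [fn_eq_mul, D_two_pow_eq_zero h₀ h₁, mul_zero]

lemma maxS_fn (n : ℕ) (x : ℝ) : maxS (fn n) x = ENNReal.ofReal |fn n x| := by
  refine le_antisymm (iSup_le fun m => ?_) (le_iSup_of_le (n + 1) (by rw [S_fn_of_ge le_rfl]))
  rcases le_or_gt m n with hm | hm
  · have h : 2 ^ m - 2 ^ n = 0 := Nat.sub_eq_zero_of_le (Nat.pow_le_pow_right two_pos hm)
    rw [S_fn_of_le (Nat.pow_le_pow_right two_pos (by omega)), h, D]
    simp
  · rw [S_fn_of_ge (Nat.pow_le_pow_right two_pos hm)]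

lemma t_eq_sum_range (q : ℕ → ℝ) (N : ℕ) (f : ℝ → ℝ) (x : ℝ) :
    t q N f x = 1 / Q q N * ∑ i ∈ range N, q i * S f (N - i) x := by
  have h := sum_Ico_reflect (fun i => q i * S f (N - i) x) 1 (m := N + 1) (n := N) le_rfl
  rw [Nat.add_sub_cancel, Nat.sub_self, ← range_eq_Ico, Finset.Ico_add_one_right_eq_Icc] at h
  rw [t, ← h]
  refine congrArg _ (sum_congr rfl fun k hk => ?_)
  rw [Nat.sub_sub_self (Finset.mem_Icc.mp hk).2]

lemma t_fn_of_mem_IN (q : ℕ → ℝ) {n s : ℕ} (hs : s ≤ n) {x : ℝ} (hx : x ∈ IN s) :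
    t q (2 ^ n + 2 ^ s) (fn n) x
      = (-1 : ℝ) ^ digit n x * (∑ i ∈ range (2 ^ s), q i * ((2 ^ s - i : ℕ) : ℝ))
          / Q q (2 ^ n + 2 ^ s) := by
  have hsn : 2 ^ s ≤ 2 ^ n := Nat.pow_le_pow_right two_pos hs
  have hS : ∀ i ∈ range (2 ^ n + 2 ^ s), q i * S (fn n) (2 ^ n + 2 ^ s - i) x
      = (-1 : ℝ) ^ digit n x * (q i * ((2 ^ s - i : ℕ) : ℝ)) := fun i _ => by
    rw [S_fn_of_le (by rw [pow_succ]; omega), show 2 ^ n + 2 ^ s - i - 2 ^ n = 2 ^ s - i by omega,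
      D_eq_of_mem_IN (Nat.sub_le _ _) hx]
    ring
  have htail : ∀ i ∈ range (2 ^ n + 2 ^ s), i ∉ range (2 ^ s) →
      q i * ((2 ^ s - i : ℕ) : ℝ) = 0 := fun i _ hi => by
    rw [Nat.sub_eq_zero_of_le (not_lt.mp (mem_range.not.mp hi)), Nat.cast_zero, mul_zero]
  rw [t_eq_sum_range, sum_congr rfl hS, ← mul_sum,
    ← sum_subset (range_subset_range.mpr (Nat.le_add_left _ _)) htail]
  ring

lemma sq_div_le_abs_t_fn {q : ℕ → ℝ} (hq : Antitone q) (hq_pos : ∀ k, 0 < q k) {n s : ℕ}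
    (hs : s ≤ n) {x : ℝ} (hx : x ∈ IN s) :
    ((2 : ℝ) ^ s) ^ 2 / (4 * 2 ^ n) ≤ |t q (2 ^ n + 2 ^ s) (fn n) x| := by
  have hQ := Q_pos hq_pos (m := 2 ^ n + 2 ^ s) (by positivity)
  have hT : 0 ≤ ∑ i ∈ range (2 ^ s), q i * ((2 ^ s - i : ℕ) : ℝ) :=
    sum_nonneg fun i _ => mul_nonneg (hq_pos i).le (Nat.cast_nonneg _)
  have hbound := sq_mul_Q_add_le hq (fun k => (hq_pos k).le) (Nat.pow_le_pow_right two_pos hs)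
  push_cast at hbound
  rw [t_fn_of_mem_IN q hs hx, abs_div, abs_mul, abs_pow, abs_neg, abs_one, one_pow, one_mul,
    abs_of_nonneg hT, abs_of_pos hQ, div_le_div_iff₀ (by positivity) hQ]
  linarith

def dyadicBlock (s : ℕ) : Set ℝ := Ico (1 / 2 ^ (s + 1)) (1 / 2 ^ s)

lemma measurableSet_dyadicBlock (s : ℕ) : MeasurableSet (dyadicBlock s) :=
  measurableSet_Ico

lemma dyadicBlock_subset_IN (s : ℕ) : dyadicBlock s ⊆ IN s :=
  Ico_subset_Ico_left (by positivity)

lemma measurableSet_IN (N : ℕ) : MeasurableSet (IN N) :=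
  measurableSet_Ico

lemma IN_subset_Ico_zero_one (s : ℕ) : IN s ⊆ Ico 0 1 :=
  Ico_subset_Ico_right (div_le_one_of_le₀ (one_le_pow₀ one_le_two) (by positivity))

lemma eq_of_mem_dyadicBlock {s s' : ℕ} {x : ℝ} (hx : x ∈ dyadicBlock s)
    (hx' : x ∈ dyadicBlock s') : s = s' := by
  have key : ∀ a b : ℕ, a < b → x ∈ dyadicBlock a → x ∉ dyadicBlock b :=
    fun a b hab ha hb => by
      have : (1 : ℝ) / 2 ^ b ≤ 1 / 2 ^ (a + 1) :=
        one_div_le_one_div_of_le (by positivity) (pow_le_pow_right₀ one_le_two hab)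
      linarith [ha.1, hb.2]
  rcases lt_trichotomy s s' with h | h | h
  · exact absurd hx' (key _ _ h hx)
  · exact h
  · exact absurd hx (key _ _ h hx')

lemma volume_real_dyadicBlock (s : ℕ) : volume.real (dyadicBlock s) = 1 / 2 ^ (s + 1) := by
  rw [dyadicBlock, Real.volume_real_Ico_of_le (one_div_le_one_div_of_le (by positivity)
    (pow_le_pow_right₀ one_le_two s.le_succ)), pow_succ]
  ring

/-- Its value on `[2^{-s-1}, 2^{-s})` is the square root of the bound of `sq_div_le_abs_t_fn`. -/
def lowerBound (n : ℕ) (x : ℝ) : ℝ :=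
  ∑ s ∈ range n, (dyadicBlock s).indicator (fun _ => 2 ^ s * 2 ^ (-(n : ℝ) / 2) / 2) x

lemma lowerBound_nonneg (n : ℕ) (x : ℝ) : 0 ≤ lowerBound n x :=
  sum_nonneg fun _ _ => indicator_nonneg (fun _ _ => by positivity) _

lemma exists_sq_lowerBound_le {q : ℕ → ℝ} (hq : Antitone q) (hq_pos : ∀ k, 0 < q k)
    {n : ℕ} (hn : 1 ≤ n) (x : ℝ) :
    ∃ s < n, lowerBound n x ^ 2 ≤ |t q (2 ^ n + 2 ^ s) (fn n) x| := by
  by_cases hx : ∃ s ∈ range n, x ∈ dyadicBlock s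
  · obtain ⟨s, hs, hxs⟩ := hx
    have hval : lowerBound n x = 2 ^ s * 2 ^ (-(n : ℝ) / 2) / 2 := by
      rw [lowerBound, sum_eq_single s (fun s' _ hne => indicator_of_notMem
        (fun h => hne (eq_of_mem_dyadicBlock h hxs)) _) (fun h => absurd hs h),
        indicator_of_mem hxs]
    refine ⟨s, mem_range.mp hs, ?_⟩
    calc lowerBound n x ^ 2 = ((2 : ℝ) ^ s) ^ 2 / (4 * 2 ^ n) := by
          rw [hval, div_pow, mul_pow, rpow_neg_half_sq]
          ring
      _ ≤ _ := sq_div_le_abs_t_fn hq hq_pos (mem_range.mp hs).le (dyadicBlock_subset_IN s hxs)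
  · push Not at hx
    have hval : lowerBound n x = 0 := sum_eq_zero fun s hs => indicator_of_notMem (hx s hs) _
    exact ⟨0, hn, by rw [hval, sq, zero_mul]; exact abs_nonneg _⟩

lemma integrableOn_indicator_dyadicBlock (s : ℕ) (c : ℝ) :
    IntegrableOn ((dyadicBlock s).indicator fun _ => c) (Ico 0 1) :=
  (integrableOn_const (by simp)).indicator (measurableSet_dyadicBlock s)

lemma integrableOn_lowerBound (n : ℕ) : IntegrableOn (lowerBound n) (Ico 0 1) :=
  integrable_finsetSum _ fun s _ => integrableOn_indicator_dyadicBlock s _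

lemma integral_lowerBound (n : ℕ) :
    ∫ x in Ico (0 : ℝ) 1, lowerBound n x = n * 2 ^ (-(n : ℝ) / 2) / 4 := by
  simp only [lowerBound]
  rw [integral_finsetSum _ fun s _ => integrableOn_indicator_dyadicBlock s _]
  have hblock : ∀ s ∈ range n, ∫ x in Ico (0 : ℝ) 1,
      (dyadicBlock s).indicator (fun _ => (2 : ℝ) ^ s * 2 ^ (-(n : ℝ) / 2) / 2) x
        = 2 ^ (-(n : ℝ) / 2) / 4 := fun s _ => by
    rw [integral_indicator_const _ (measurableSet_dyadicBlock s),
      measureReal_restrict_apply (measurableSet_dyadicBlock s),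
      inter_eq_left.mpr ((dyadicBlock_subset_IN s).trans (IN_subset_Ico_zero_one s)),
      volume_real_dyadicBlock, smul_eq_mul, pow_succ]
    field_simp
    ring
  rw [sum_congr rfl hblock, sum_const, card_range, nsmul_eq_mul]
  ring

lemma integral_lowerBound_le_integral_sup {q : ℕ → ℝ} (hq : Antitone q)
    (hq_pos : ∀ k, 0 < q k) {n : ℕ} (hn : 1 ≤ n) :
    ∫ x in Ico (0 : ℝ) 1, lowerBound n x
      ≤ ∫ x in Ico (0 : ℝ) 1,
          (⨆ s ∈ range n, |t q (2 ^ n + 2 ^ s) (fn n) x|) ^ (1 / 2 : ℝ) := by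
  refine integral_mono (integrableOn_lowerBound n)
    (integrableOn_of_floor_eq (J := n + 1) fun x y h => by simp_rw [t_fn_congr_floor q n _ h])
    fun x => ?_
  obtain ⟨s, hs, hle⟩ := exists_sq_lowerBound_le hq hq_pos hn x
  refine (le_rpow_half_of_sq_le (lowerBound_nonneg n x) hle).trans
    (Real.rpow_le_rpow (abs_nonneg _) ?_ (by norm_num))
  exact le_biSup_of_mem (fun s => |t q (2 ^ n + 2 ^ s) (fn n) x|) (mem_range.mpr hs)

lemma ofReal_lowerBound_le_tstar {q : ℕ → ℝ} (hq : Antitone q) (hq_pos : ∀ k, 0 < q k)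
    {n : ℕ} (hn : 1 ≤ n) (x : ℝ) :
    ENNReal.ofReal (lowerBound n x) ≤ tstar q (fn n) x ^ (1 / 2 : ℝ) := by
  obtain ⟨s, -, hle⟩ := exists_sq_lowerBound_le hq hq_pos hn x
  calc ENNReal.ofReal (lowerBound n x)
      ≤ ENNReal.ofReal (|t q (2 ^ n + 2 ^ s) (fn n) x| ^ (1 / 2 : ℝ)) :=
        ENNReal.ofReal_le_ofReal (le_rpow_half_of_sq_le (lowerBound_nonneg n x) hle)
    _ = ENNReal.ofReal |t q (2 ^ n + 2 ^ s) (fn n) x| ^ (1 / 2 : ℝ) :=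
        (ENNReal.ofReal_rpow_of_nonneg (abs_nonneg _) (by norm_num)).symm
    _ ≤ tstar q (fn n) x ^ (1 / 2 : ℝ) :=
        ENNReal.rpow_le_rpow (le_iSup₂_of_le (f := fun N (_ : N ∈ Set.Ici 1) =>
          ENNReal.ofReal |t q N (fn n) x|) (2 ^ n + 2 ^ s)
          (Set.mem_Ici.mpr (Nat.one_le_two_pow.trans (Nat.le_add_right _ _))) le_rfl) (by norm_num)

lemma ofReal_le_lintegral_tstar {q : ℕ → ℝ} (hq : Antitone q) (hq_pos : ∀ k, 0 < q k)
    {n : ℕ} (hn : 1 ≤ n) :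
    ENNReal.ofReal (n * 2 ^ (-(n : ℝ) / 2) / 4)
      ≤ ∫⁻ x in Ico (0 : ℝ) 1, tstar q (fn n) x ^ (1 / 2 : ℝ) := by
  rw [← integral_lowerBound, ofReal_integral_eq_lintegral_ofReal (integrableOn_lowerBound n)
    (ae_of_all _ (lowerBound_nonneg n))]
  exact lintegral_mono (ofReal_lowerBound_le_tstar hq hq_pos hn)

lemma lintegral_maxS_fn (n : ℕ) :
    ∫⁻ x in Ico (0 : ℝ) 1, maxS (fn n) x ^ (1 / 2 : ℝ)
      = ENNReal.ofReal (2 ^ (-(n : ℝ) / 2)) := by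
  have h : EqOn (fun x => maxS (fn n) x ^ (1 / 2 : ℝ))
      ((IN n).indicator fun _ => ENNReal.ofReal (((2 : ℝ) ^ n) ^ (1 / 2 : ℝ))) (Ico 0 1) :=
    fun x hx => by
      dsimp only
      by_cases hxn : x ∈ IN n
      · rw [maxS_fn, abs_fn_of_mem_IN hxn, indicator_of_mem hxn,
          ENNReal.ofReal_rpow_of_nonneg (by positivity) (by norm_num)]
      · have h₀ : 1 / 2 ^ n ≤ x := not_lt.mp fun h => hxn ⟨hx.1, h⟩
        rw [maxS_fn, fn_eq_zero h₀ hx.2, indicator_of_notMem hxn, abs_zero, ENNReal.ofReal_zero,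
          ENNReal.zero_rpow_of_pos (by norm_num)]
  rw [setLIntegral_congr_fun measurableSet_Ico h, lintegral_indicator_const (measurableSet_IN n),
    Measure.restrict_apply (measurableSet_IN n), inter_eq_left.mpr (IN_subset_Ico_zero_one n), IN,
    Real.volume_Ico, sub_zero, ← ENNReal.ofReal_mul (by positivity), rpow_half_mul_inv_two_pow]

lemma ofReal_le_tstar_div_HpNorm {q : ℕ → ℝ} (hq : Antitone q) (hq_pos : ∀ k, 0 < q k)
    {n : ℕ} (hn : 1 ≤ n) :
    ENNReal.ofReal (1 / 4 * n)
      ≤ LpNormE (1 / 2) (tstar q (fn n)) ^ (1 / 2 : ℝ)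
          / HpNorm (1 / 2) (fn n) ^ (1 / 2 : ℝ) := by
  have hb : (0 : ℝ) < 2 ^ (-(n : ℝ) / 2) := by positivity
  rw [LpNormE, HpNorm, rpow_half_rpow_inv_half, rpow_half_rpow_inv_half, lintegral_maxS_fn,
    show (1 / 4 * n : ℝ) = n * 2 ^ (-(n : ℝ) / 2) / 4 / 2 ^ (-(n : ℝ) / 2) by field_simp,
    ENNReal.ofReal_div_of_pos hb]
  exact ENNReal.div_le_div_right (ofReal_le_lintegral_tstar hq hq_pos hn) _

end Walsh

/-- quantitative unboundedness at the endpoint `p = 1/2`. -/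
theorem norlund_maximal_lower_bound_half
    (q : ℕ → ℝ) (hq_anti : Antitone q) (hq_pos : ∀ k, 0 < q k) :
    ∃ c : ℝ, 0 < c ∧
      (∀ n : ℕ, 1 ≤ n →
        c * n * (2:ℝ) ^ (-(n:ℝ) / 2)
          ≤ ∫ x in Set.Ico (0:ℝ) 1,
              (⨆ s ∈ Finset.range n,
                |Walsh.t q (2 ^ n + 2 ^ s)
                  (fun y => Walsh.D (2 ^ (n + 1)) y - Walsh.D (2 ^ n) y) x|) ^ (1/2 : ℝ))
      ∧ (∀ n : ℕ, 1 ≤ n →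
          ENNReal.ofReal (c * n)
            ≤ (Walsh.LpNormE (1/2)
                  (Walsh.tstar q (fun y => Walsh.D (2 ^ (n + 1)) y - Walsh.D (2 ^ n) y)))
                    ^ (1/2 : ℝ)
              / (Walsh.HpNorm (1/2)
                  (fun y => Walsh.D (2 ^ (n + 1)) y - Walsh.D (2 ^ n) y)) ^ (1/2 : ℝ))
      ∧ Filter.Tendsto (fun n : ℕ =>
            (Walsh.LpNormE (1/2)
                (Walsh.tstar q (fun y => Walsh.D (2 ^ (n + 1)) y - Walsh.D (2 ^ n) y)))
                  ^ (1/2 : ℝ)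
              / (Walsh.HpNorm (1/2)
                  (fun y => Walsh.D (2 ^ (n + 1)) y - Walsh.D (2 ^ n) y)) ^ (1/2 : ℝ))
          Filter.atTop (nhds ⊤) := by
  refine ⟨1 / 4, by norm_num, fun n hn => ?_,
    fun n hn => Walsh.ofReal_le_tstar_div_HpNorm hq_anti hq_pos hn, ?_⟩
  · calc 1 / 4 * n * (2 : ℝ) ^ (-(n : ℝ) / 2)
        = ∫ x in Set.Ico (0 : ℝ) 1, Walsh.lowerBound n x := by
          rw [Walsh.integral_lowerBound]; ring
      _ ≤ _ := Walsh.integral_lowerBound_le_integral_sup hq_anti hq_pos hn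
  · refine tendsto_nhds_top_mono (ENNReal.tendsto_ofReal_atTop.comp
      (tendsto_natCast_atTop_atTop.const_mul_atTop (by norm_num : (0 : ℝ) < 1 / 4))) ?_
    exact eventually_atTop.mpr
      ⟨1, fun n hn => Walsh.ofReal_le_tstar_div_HpNorm hq_anti hq_pos hn⟩
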